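/- Let n ≥ 1, let λ : Fin n → ℝ satisfy λᵢ > 0 for all i, let c̄ : Fin n → ℝ with nonempty support S := {i : c̄ᵢ ≠ 0}, and define f(β) := −β − Σ_{i ∈ S} c̄ᵢ² λᵢ β/(λᵢ β − 1) and f''(β) := −2 Σ_{i ∈ S} c̄ᵢ² λᵢ²/(λᵢ β − 1)³, with λ_min := min_i λᵢ. Let 1/λ_min < l ≤ u and suppose β* ∈ [l,u] is a maximizer of f over (1/λ_min, ∞). Then for every β ∈ [l,u]: f(β) ≤ f(β*) ≤ f(β) − (f''(l)/2)·(u − l)². -/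

import Mathlib

/-
Since `f''` is increasing on `(1/λ_min, ∞)`, it is at least `f''(l)` on `[l, ∞)`, so
`β ↦ f(β) - f''(l)/2 · (β - β*)²` is convex there. Its derivative vanishes at the critical point
`β*`, which is therefore its minimum on `[l, ∞)`; bounding `(β - β*)²` by `(u - l)²` gives the
upper bound, and the lower bound is the maximality of `β*`.
-/

open Matrix

noncomputable section

/-- The minimum of the eigenvalues `λ i`, for `n ≥ 1`. -/
def lamMin {n : ℕ} (hn : 1 ≤ n) (lam : Fin n → ℝ) : ℝ :=
  Finset.univ.inf' ⟨⟨0, hn⟩, Finset.mem_univ _⟩ lam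

open Classical in
/-- The dual function `f(β) = −β − Σ_{i ∈ S} c̄ᵢ² λᵢβ/(λᵢβ−1)`, where `S` is the
support of `c̄`. -/
def ellFun {n : ℕ} (lam cbar : Fin n → ℝ) (β : ℝ) : ℝ :=
  -β - ∑ i ∈ Finset.univ.filter (fun i => cbar i ≠ 0),
    (cbar i) ^ 2 * (lam i * β / (lam i * β - 1))

open Classical in
/-- Its second derivative `f''(β) = −2 Σ_{i ∈ S} c̄ᵢ² λᵢ²/(λᵢβ−1)³` on `(1/λ_min, ∞)`. -/
def ellFun'' {n : ℕ} (lam cbar : Fin n → ℝ) (β : ℝ) : ℝ :=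
  -2 * ∑ i ∈ Finset.univ.filter (fun i => cbar i ≠ 0),
    (cbar i) ^ 2 * ((lam i) ^ 2 / (lam i * β - 1) ^ 3)

lemma ConvexOn.isMinOn_of_hasDerivAt_eq_zero {s : Set ℝ} {g : ℝ → ℝ} {x₀ : ℝ}
    (hg : ConvexOn ℝ s g) (hx₀ : x₀ ∈ s) (hd : HasDerivAt g 0 x₀) : IsMinOn g s x₀ := by
  intro x hx
  show g x₀ ≤ g x
  rcases lt_trichotomy x x₀ with hlt | rfl | hgt
  · have := hg.slope_le_of_hasDerivAt hx hx₀ hlt hd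
    rw [slope_def_field, div_le_iff₀ (sub_pos.2 hlt)] at this
    linarith
  · exact le_rfl
  · have := hg.le_slope_of_hasDerivAt hx₀ hx hgt hd
    rw [slope_def_field, le_div_iff₀ (sub_pos.2 hgt)] at this
    linarith

lemma le_sub_mul_sq_of_hasDerivAt_eq_zero {s : Set ℝ} {f f' f'' : ℝ → ℝ} {m x₀ x : ℝ}
    (hs : Convex ℝ s) (hf : ∀ y ∈ s, HasDerivAt f (f' y) y)
    (hf' : ∀ y ∈ s, HasDerivAt f' (f'' y) y) (hm : ∀ y ∈ s, m ≤ f'' y)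
    (hx₀ : x₀ ∈ s) (hcrit : f' x₀ = 0) (hx : x ∈ s) :
    f x₀ ≤ f x - m / 2 * (x - x₀) ^ 2 := by
  have hq : ∀ y, HasDerivAt (fun y => m / 2 * (y - x₀) ^ 2) (m * (y - x₀)) y := fun y => by
    refine ((((hasDerivAt_id y).sub_const x₀).pow 2).const_mul (m / 2)).congr_deriv ?_
    simp only [id_eq]; push_cast; ring
  set g := fun y => f y - m / 2 * (y - x₀) ^ 2
  have hg : ∀ y ∈ s, HasDerivAt g (f' y - m * (y - x₀)) y := fun y hy => (hf y hy).fun_sub (hq y)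
  have hg' : ∀ y ∈ s, HasDerivAt (fun y => f' y - m * (y - x₀)) (f'' y - m) y := fun y hy => by
    simpa using (hf' y hy).fun_sub (((hasDerivAt_id y).sub_const x₀).const_mul m)
  have hconvex : ConvexOn ℝ s g :=
    convexOn_of_hasDerivWithinAt2_nonneg hs
      (fun y hy => (hg y hy).continuousAt.continuousWithinAt)
      (fun y hy => (hg y (interior_subset hy)).hasDerivWithinAt)
      (fun y hy => (hg' y (interior_subset hy)).hasDerivWithinAt)
      (fun y hy => sub_nonneg.2 (hm y (interior_subset hy)))
  have hmin := hconvex.isMinOn_of_hasDerivAt_eq_zero hx₀ (by simpa [hcrit] using hg x₀ hx₀) hx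
  simpa [g] using hmin

lemma hasDerivAt_mul_div_mul_sub_one {a x : ℝ} (hx : a * x - 1 ≠ 0) :
    HasDerivAt (fun x => a * x / (a * x - 1)) (-(a / (a * x - 1) ^ 2)) x := by
  have hlin : HasDerivAt (fun x => a * x) a x := by simpa using (hasDerivAt_id x).const_mul a
  refine (hlin.div (hlin.sub_const 1) hx).congr_deriv ?_
  field_simp
  ring

lemma hasDerivAt_div_mul_sub_one_sq {a x : ℝ} (hx : a * x - 1 ≠ 0) :
    HasDerivAt (fun x => a / (a * x - 1) ^ 2) (-2 * (a ^ 2 / (a * x - 1) ^ 3)) x := by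
  have hlin : HasDerivAt (fun x => a * x - 1) a x := by
    simpa using ((hasDerivAt_id x).const_mul a).sub_const 1
  refine ((hasDerivAt_const x a).div (hlin.pow 2) (pow_ne_zero 2 hx)).congr_deriv ?_
  simp only [Pi.pow_apply]
  field_simp
  ring

open Classical in
def ellFun' {n : ℕ} (lam cbar : Fin n → ℝ) (β : ℝ) : ℝ :=
  -1 + ∑ i ∈ Finset.univ.filter (fun i => cbar i ≠ 0),
    (cbar i) ^ 2 * (lam i / (lam i * β - 1) ^ 2)

section

variable {n : ℕ} {lam : Fin n → ℝ} (cbar : Fin n → ℝ)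

lemma hasDerivAt_ellFun {β : ℝ} (hβ : ∀ i, lam i * β - 1 ≠ 0) :
    HasDerivAt (ellFun lam cbar) (ellFun' lam cbar β) β := by
  unfold ellFun ellFun'
  refine ((hasDerivAt_neg β).fun_sub (HasDerivAt.fun_sum fun i _ =>
    (hasDerivAt_mul_div_mul_sub_one (hβ i)).const_mul (cbar i ^ 2))).congr_deriv ?_
  simp only [mul_neg, Finset.sum_neg_distrib]
  ring

lemma hasDerivAt_ellFun' {β : ℝ} (hβ : ∀ i, lam i * β - 1 ≠ 0) :
    HasDerivAt (ellFun' lam cbar) (ellFun'' lam cbar β) β := by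
  unfold ellFun' ellFun''
  refine ((hasDerivAt_const β (-1 : ℝ)).fun_add (HasDerivAt.fun_sum fun i _ =>
    (hasDerivAt_div_mul_sub_one_sq (hβ i)).const_mul (cbar i ^ 2))).congr_deriv ?_
  rw [zero_add, Finset.mul_sum]
  exact Finset.sum_congr rfl fun i _ => by ring

lemma ellFun''_nonpos {β : ℝ} (hβ : ∀ i, 0 < lam i * β - 1) : ellFun'' lam cbar β ≤ 0 := by
  unfold ellFun''
  have : 0 ≤ ∑ i ∈ Finset.univ.filter (fun i => cbar i ≠ 0),
      (cbar i) ^ 2 * ((lam i) ^ 2 / (lam i * β - 1) ^ 3) :=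
    Finset.sum_nonneg fun i _ => by have := hβ i; positivity
  linarith

lemma ellFun''_le_ellFun'' (hlam : ∀ i, 0 ≤ lam i) {l x : ℝ} (hl : ∀ i, 0 < lam i * l - 1)
    (hlx : l ≤ x) : ellFun'' lam cbar l ≤ ellFun'' lam cbar x := by
  unfold ellFun''
  have : ∑ i ∈ Finset.univ.filter (fun i => cbar i ≠ 0),
      (cbar i) ^ 2 * ((lam i) ^ 2 / (lam i * x - 1) ^ 3) ≤
      ∑ i ∈ Finset.univ.filter (fun i => cbar i ≠ 0),
      (cbar i) ^ 2 * ((lam i) ^ 2 / (lam i * l - 1) ^ 3) := by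
    refine Finset.sum_le_sum fun i _ => ?_
    have := hl i
    have : lam i * l ≤ lam i * x := mul_le_mul_of_nonneg_left hlx (hlam i)
    gcongr
  linarith

end

lemma lamMin_pos {n : ℕ} (hn : 1 ≤ n) {lam : Fin n → ℝ} (hlam : ∀ i, 0 < lam i) :
    0 < lamMin hn lam :=
  Finset.lt_inf'_iff _ |>.mpr fun i _ => hlam i

lemma lam_mul_sub_one_pos {n : ℕ} (hn : 1 ≤ n) {lam : Fin n → ℝ} (hlam : ∀ i, 0 < lam i)
    {β : ℝ} (hβ : 1 / lamMin hn lam < β) (i : Fin n) : 0 < lam i * β - 1 := by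
  have hmin := lamMin_pos hn hlam
  have hβ₀ : 0 < β := lt_trans (by positivity) hβ
  have : lamMin hn lam * β ≤ lam i * β :=
    mul_le_mul_of_nonneg_right (Finset.inf'_le _ (Finset.mem_univ i)) hβ₀.le
  rw [div_lt_iff₀ hmin] at hβ
  linarith

theorem stmt_19_general {n : ℕ} (hn : 1 ≤ n) (lam cbar : Fin n → ℝ) (hlam : ∀ i, 0 < lam i)
    (l u : ℝ) (hl : 1 / lamMin hn lam < l)
    (βs : ℝ) (hβs : βs ∈ Set.Icc l u)
    (hmax : ∀ β ∈ Set.Ioi (1 / lamMin hn lam), ellFun lam cbar β ≤ ellFun lam cbar βs) :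
    ∀ β ∈ Set.Icc l u,
      ellFun lam cbar β ≤ ellFun lam cbar βs ∧
      ellFun lam cbar βs ≤ ellFun lam cbar β - ellFun'' lam cbar l / 2 * (u - l) ^ 2 := by
  have hpos : ∀ x ∈ Set.Ici l, ∀ i, 0 < lam i * x - 1 := fun x hx =>
    lam_mul_sub_one_pos hn hlam (hl.trans_le hx)
  have hβs_gt : 1 / lamMin hn lam < βs := hl.trans_le hβs.1
  have hcrit : ellFun' lam cbar βs = 0 :=
    (IsMaxOn.isLocalMax (f := ellFun lam cbar) hmax (Ioi_mem_nhds hβs_gt)).hasDerivAt_eq_zero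
      (hasDerivAt_ellFun cbar fun i => (hpos βs hβs.1 i).ne')
  intro β hβ
  refine ⟨hmax β (hl.trans_le hβ.1), ?_⟩
  have hsmooth := le_sub_mul_sq_of_hasDerivAt_eq_zero (convex_Ici l)
    (fun x hx => hasDerivAt_ellFun cbar fun i => (hpos x hx i).ne')
    (fun x hx => hasDerivAt_ellFun' cbar fun i => (hpos x hx i).ne')
    (fun x hx => ellFun''_le_ellFun'' cbar (fun i => (hlam i).le) (hpos l Set.self_mem_Ici) hx)
    hβs.1 hcrit hβ.1
  have hL : 0 ≤ -ellFun'' lam cbar l := neg_nonneg.2 (ellFun''_nonpos cbar (hpos l Set.self_mem_Ici))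
  have hsq : (β - βs) ^ 2 ≤ (u - l) ^ 2 :=
    sq_le_sq' (by linarith [hβ.1, hβs.2]) (by linarith [hβ.2, hβs.1])
  linarith [mul_le_mul_of_nonneg_left hsq hL]

theorem stmt_19 {n : ℕ} (hn : 1 ≤ n) (lam cbar : Fin n → ℝ) (hlam : ∀ i, 0 < lam i)
    (hS : ∃ i, cbar i ≠ 0)
    (l u : ℝ) (hl : 1 / lamMin hn lam < l) (hlu : l ≤ u)
    (βs : ℝ) (hβs : βs ∈ Set.Icc l u)
    (hmax : ∀ β ∈ Set.Ioi (1 / lamMin hn lam), ellFun lam cbar β ≤ ellFun lam cbar βs) :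
    ∀ β ∈ Set.Icc l u,
      ellFun lam cbar β ≤ ellFun lam cbar βs ∧
      ellFun lam cbar βs ≤ ellFun lam cbar β - ellFun'' lam cbar l / 2 * (u - l) ^ 2 :=
  stmt_19_general hn lam cbar hlam l u hl βs hβs hmax
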